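/- Fix 0 ≤ a < b ≤ 1 and define w : (a, b) → ℝ by w(x) = (x − a)(ξ'(b) − ξ'(x)) / ((b − x)(ξ'(x) − ξ'(a))). Then for every x ∈ (a, b), the derivative w'(x) has the same sign as t(x) := (b − a)(ξ'(b) − ξ'(x))(ξ'(x) − ξ'(a)) − ξ''(x)(ξ'(b) − ξ'(a))(b − x)(x − a); that is, w'(x) is positive, zero, or negative exactly when t(x) is positive, zero, or negative respectively. -/

import Mathlib

noncomputable section

/-- The mixed p-spin function `ξ(x) = Σ_j λ_j x^{p_j}`. -/
def xiF (n : ℕ) (p : Fin n → ℕ) (lam : Fin n → ℝ) : ℝ → ℝ :=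
  fun x => ∑ j, lam j * x ^ p j

/-!
Writing `w = N / D` with `N(u) = (u - a)(ξ'(b) - ξ'(u))` and `D(u) = (b - u)(ξ'(u) - ξ'(a))`, the
quotient rule gives `w' = (N' D - N D') / D²`, and the numerator `N' D - N D'` simplifies to `t`.
Since `ξ'` is strictly increasing on `[0, ∞)`, `D` does not vanish on `(a, b)`, so `D² > 0` and
`w'` has the sign of `t`.
-/

theorem hasDerivAt_ratio_sub_mul {f : ℝ → ℝ} {f' a b x : ℝ} (hf : HasDerivAt f f' x)
    (hxb : b - x ≠ 0) (hxa : f x - f a ≠ 0) :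
    HasDerivAt (fun u => (u - a) * (f b - f u) / ((b - u) * (f u - f a)))
      (((b - a) * (f b - f x) * (f x - f a) - f' * (f b - f a) * (b - x) * (x - a)) /
        ((b - x) * (f x - f a)) ^ 2) x := by
  have hN : HasDerivAt (fun u => (u - a) * (f b - f u)) (1 * (f b - f x) + (x - a) * (0 - f')) x :=
    ((hasDerivAt_id x).sub_const a).mul ((hasDerivAt_const x (f b)).sub hf)
  have hD : HasDerivAt (fun u => (b - u) * (f u - f a)) ((0 - 1) * (f x - f a) + (b - x) * f') x :=
    ((hasDerivAt_const x b).sub (hasDerivAt_id x)).mul (hf.sub_const (f a))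
  refine (hN.fun_div hD (mul_ne_zero hxb hxa)).congr_deriv ?_
  congr 1
  ring

theorem hasDerivAt_xiF (n : ℕ) (p : Fin n → ℕ) (lam : Fin n → ℝ) (x : ℝ) :
    HasDerivAt (xiF n p lam) (∑ j, lam j * (p j * x ^ (p j - 1))) x :=
  HasDerivAt.fun_sum fun j _ => (hasDerivAt_pow (p j) x).const_mul (lam j)

theorem deriv_xiF (n : ℕ) (p : Fin n → ℕ) (lam : Fin n → ℝ) :
    deriv (xiF n p lam) = fun x => ∑ j, lam j * (p j * x ^ (p j - 1)) :=
  funext fun x => (hasDerivAt_xiF n p lam x).deriv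

theorem differentiable_deriv_xiF (n : ℕ) (p : Fin n → ℕ) (lam : Fin n → ℝ) :
    Differentiable ℝ (deriv (xiF n p lam)) := by
  rw [deriv_xiF]
  fun_prop

theorem strictMonoOn_deriv_xiF {n : ℕ} [Nonempty (Fin n)] {p : Fin n → ℕ} (hp : ∀ i, 1 < p i)
    {lam : Fin n → ℝ} (hlam : ∀ i, 0 < lam i) :
    StrictMonoOn (deriv (xiF n p lam)) (Set.Ici 0) := by
  intro u hu v _ huv
  rw [deriv_xiF]
  refine Finset.sum_lt_sum_of_nonempty Finset.univ_nonempty fun j _ => ?_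
  have hpj : (0 : ℝ) < p j := by exact_mod_cast (zero_lt_one.trans (hp j))
  have hpow : u ^ (p j - 1) < v ^ (p j - 1) :=
    pow_lt_pow_left₀ huv hu (by have := hp j; omega)
  exact mul_lt_mul_of_pos_left (mul_lt_mul_of_pos_left hpow hpj) (hlam j)

theorem w_deriv_sign_general
    (n : ℕ) (hn : 1 ≤ n) (p : Fin n → ℕ) (hp2 : ∀ i, 2 < p i)
    (lam : Fin n → ℝ) (hlam : ∀ i, 0 < lam i)
    (a b : ℝ) (ha : 0 ≤ a)
    (x : ℝ) (hx : x ∈ Set.Ioo a b) :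
    (0 < deriv (fun u => ((u - a) * (deriv (xiF n p lam) b - deriv (xiF n p lam) u)) /
          ((b - u) * (deriv (xiF n p lam) u - deriv (xiF n p lam) a))) x ↔
        0 < (b - a) * (deriv (xiF n p lam) b - deriv (xiF n p lam) x) *
              (deriv (xiF n p lam) x - deriv (xiF n p lam) a) -
            deriv (deriv (xiF n p lam)) x *
              (deriv (xiF n p lam) b - deriv (xiF n p lam) a) * (b - x) * (x - a)) ∧
    (deriv (fun u => ((u - a) * (deriv (xiF n p lam) b - deriv (xiF n p lam) u)) /
          ((b - u) * (deriv (xiF n p lam) u - deriv (xiF n p lam) a))) x = 0 ↔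
        (b - a) * (deriv (xiF n p lam) b - deriv (xiF n p lam) x) *
            (deriv (xiF n p lam) x - deriv (xiF n p lam) a) -
          deriv (deriv (xiF n p lam)) x *
            (deriv (xiF n p lam) b - deriv (xiF n p lam) a) * (b - x) * (x - a) = 0) ∧
    (deriv (fun u => ((u - a) * (deriv (xiF n p lam) b - deriv (xiF n p lam) u)) /
          ((b - u) * (deriv (xiF n p lam) u - deriv (xiF n p lam) a))) x < 0 ↔
        (b - a) * (deriv (xiF n p lam) b - deriv (xiF n p lam) x) *
            (deriv (xiF n p lam) x - deriv (xiF n p lam) a) -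
          deriv (deriv (xiF n p lam)) x *
            (deriv (xiF n p lam) b - deriv (xiF n p lam) a) * (b - x) * (x - a) < 0) := by
  obtain ⟨hax, hxb⟩ := hx
  have : Nonempty (Fin n) := ⟨⟨0, hn⟩⟩
  have hxa : 0 < deriv (xiF n p lam) x - deriv (xiF n p lam) a :=
    sub_pos.2 <| strictMonoOn_deriv_xiF (fun i => (hp2 i).trans' one_lt_two) hlam
      (Set.mem_Ici.2 ha) (Set.mem_Ici.2 (ha.trans hax.le)) hax
  have hW := hasDerivAt_ratio_sub_mul
    ((differentiable_deriv_xiF n p lam x).hasDerivAt) (sub_pos.2 hxb).ne' hxa.ne'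
  have hD : 0 < ((b - x) * (deriv (xiF n p lam) x - deriv (xiF n p lam) a)) ^ 2 := by
    have := sub_pos.2 hxb
    positivity
  rw [hW.deriv]
  exact ⟨div_pos_iff_of_pos_right hD, by simp [hD.ne'], by rw [div_lt_iff₀ hD, zero_mul]⟩

/-- For `0 ≤ a < b ≤ 1` and
`w(x) = (x-a)(ξ'(b)-ξ'(x)) / ((b-x)(ξ'(x)-ξ'(a)))`, on `(a,b)` the derivative `w'(x)` has the
same sign as `t(x) = (b-a)(ξ'(b)-ξ'(x))(ξ'(x)-ξ'(a)) - ξ''(x)(ξ'(b)-ξ'(a))(b-x)(x-a)`. -/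
theorem w_deriv_sign
    (n : ℕ) (hn : 1 ≤ n) (p : Fin n → ℕ) (hp2 : ∀ i, 2 < p i) (hpmono : StrictMono p)
    (lam : Fin n → ℝ) (hlam : ∀ i, 0 < lam i) (hlamsum : ∑ i, lam i = 1)
    (a b : ℝ) (ha : 0 ≤ a) (hab : a < b) (hb : b ≤ 1)
    (x : ℝ) (hx : x ∈ Set.Ioo a b) :
    (0 < deriv (fun u => ((u - a) * (deriv (xiF n p lam) b - deriv (xiF n p lam) u)) /
          ((b - u) * (deriv (xiF n p lam) u - deriv (xiF n p lam) a))) x ↔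
        0 < (b - a) * (deriv (xiF n p lam) b - deriv (xiF n p lam) x) *
              (deriv (xiF n p lam) x - deriv (xiF n p lam) a) -
            deriv (deriv (xiF n p lam)) x *
              (deriv (xiF n p lam) b - deriv (xiF n p lam) a) * (b - x) * (x - a)) ∧
    (deriv (fun u => ((u - a) * (deriv (xiF n p lam) b - deriv (xiF n p lam) u)) /
          ((b - u) * (deriv (xiF n p lam) u - deriv (xiF n p lam) a))) x = 0 ↔
        (b - a) * (deriv (xiF n p lam) b - deriv (xiF n p lam) x) *
            (deriv (xiF n p lam) x - deriv (xiF n p lam) a) -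
          deriv (deriv (xiF n p lam)) x *
            (deriv (xiF n p lam) b - deriv (xiF n p lam) a) * (b - x) * (x - a) = 0) ∧
    (deriv (fun u => ((u - a) * (deriv (xiF n p lam) b - deriv (xiF n p lam) u)) /
          ((b - u) * (deriv (xiF n p lam) u - deriv (xiF n p lam) a))) x < 0 ↔
        (b - a) * (deriv (xiF n p lam) b - deriv (xiF n p lam) x) *
            (deriv (xiF n p lam) x - deriv (xiF n p lam) a) -
          deriv (deriv (xiF n p lam)) x *
            (deriv (xiF n p lam) b - deriv (xiF n p lam) a) * (b - x) * (x - a) < 0) :=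
  w_deriv_sign_general n hn p hp2 lam hlam a b ha x hx
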